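/- For α > 0 and λ > 0, the density power divergence Poisson loss l_α(λ, x) = Σ_{y=0}^∞ p_λ(y)^{1+α} − (1 + 1/α) p_λ(x)^α, where p_λ(y) = e^{−λ}λ^y/y!, satisfies: for X ~ Poisson(λ₀), the expectation E[l_α(λ, X)] is uniquely minimized over λ > 0 at λ = λ₀. -/

import Mathlib

/-!
Pointwise, `(1 + α) p q^α ≤ p^(1+α) + α q^(1+α)` is the weighted AM-GM inequality for
`p^(1+α)` and `q^(1+α)` with weights `1/(1+α)` and `α/(1+α)`, strict unless `p = q`. Summing it
shows that `α` times the excess loss of a model `q` over the truth `p` is a sum of nonnegative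
terms (the density power divergence), positive as soon as `q ≠ p`. Poisson pmfs are bounded by
`1`, which gives all summability, and distinct means give distinct masses at `0`.
-/

/-- The Poisson probability mass function with mean `l`. -/
noncomputable def poissonPmf (l : ℝ) (y : ℕ) : ℝ :=
  Real.exp (-l) * l ^ y / (Nat.factorial y : ℝ)

namespace Real

lemma one_add_mul_mul_rpow_lt {α a b : ℝ} (hα : 0 < α) (ha : 0 ≤ a) (hb : 0 ≤ b)
    (hab : a ≠ b) :
    (1 + α) * (a * b ^ α) < a ^ (1 + α) + α * b ^ (1 + α) := by
  have hα' : 0 < 1 + α := by linarith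
  have amgm := (geom_mean_lt_arith_mean2_weighted_iff_of_pos (w₁ := (1 + α)⁻¹)
    (w₂ := α / (1 + α)) (p₁ := a ^ (1 + α)) (p₂ := b ^ (1 + α)) (by positivity)
    (by positivity) (by positivity) (by positivity) (by field_simp)).2
    fun h ↦ hab ((rpow_left_inj ha hb hα'.ne').1 h)
  rw [rpow_rpow_inv ha hα'.ne', ← rpow_mul hb, mul_div_cancel₀ α hα'.ne'] at amgm
  calc (1 + α) * (a * b ^ α)
      < (1 + α) * ((1 + α)⁻¹ * a ^ (1 + α) + α / (1 + α) * b ^ (1 + α)) := by gcongr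
    _ = a ^ (1 + α) + α * b ^ (1 + α) := by field_simp

lemma one_add_mul_mul_rpow_le {α a b : ℝ} (hα : 0 < α) (ha : 0 ≤ a) (hb : 0 ≤ b) :
    (1 + α) * (a * b ^ α) ≤ a ^ (1 + α) + α * b ^ (1 + α) := by
  rcases eq_or_ne a b with rfl | hab
  · rw [rpow_one_add' ha (by linarith)]
    exact le_of_eq (by ring)
  · exact (one_add_mul_mul_rpow_lt hα ha hb hab).le

end Real

/-- `E_{X ∼ p}[l_α(q, X)]` in the paper's notation, for the true pmf `p` and the model pmf `q`. -/
noncomputable def expectedDPDLoss {ι : Type*} (α : ℝ) (p q : ι → ℝ) : ℝ :=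
  (∑' i, q i ^ (1 + α)) - (1 + 1 / α) * ∑' i, p i * q i ^ α

open Real in
theorem expectedDPDLoss_lt_of_ne {ι : Type*} {α : ℝ} {p q : ι → ℝ} (hα : 0 < α) (hp : 0 ≤ p)
    (hq : 0 ≤ q) (hpp : Summable fun i ↦ p i ^ (1 + α)) (hqq : Summable fun i ↦ q i ^ (1 + α))
    (hpq : Summable fun i ↦ p i * q i ^ α) (hne : p ≠ q) :
    expectedDPDLoss α p p < expectedDPDLoss α p q := by
  unfold expectedDPDLoss
  obtain ⟨j, hj⟩ := Function.ne_iff.1 hne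
  have hAB := hpp.add (hqq.mul_left α)
  have hsum := hAB.sub (hpq.mul_left (1 + α))
  have hgap : 0 < ∑' i, (p i ^ (1 + α) + α * q i ^ (1 + α) - (1 + α) * (p i * q i ^ α)) :=
    hsum.tsum_pos (fun i ↦ sub_nonneg.2 (one_add_mul_mul_rpow_le hα (hp i) (hq i))) j
      (sub_pos.2 (one_add_mul_mul_rpow_lt hα (hp j) (hq j) hj))
  have hpp' : ∑' i, p i * p i ^ α = ∑' i, p i ^ (1 + α) :=
    tsum_congr fun i ↦ (rpow_one_add' (hp i) (by linarith)).symm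
  rw [hAB.tsum_sub (hpq.mul_left (1 + α)), hpp.tsum_add (hqq.mul_left α), tsum_mul_left,
    tsum_mul_left] at hgap
  rw [hpp']
  set A := ∑' i, p i ^ (1 + α)
  set B := ∑' i, q i ^ (1 + α)
  set C := ∑' i, p i * q i ^ α
  have hdiff :
      (B - (1 + 1 / α) * C) - (A - (1 + 1 / α) * A) = (A + α * B - (1 + α) * C) / α := by
    field_simp
    ring
  linarith [div_pos hgap hα]

lemma poissonPmf_nonneg {l : ℝ} (hl : 0 ≤ l) (y : ℕ) : 0 ≤ poissonPmf l y := by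
  unfold poissonPmf
  positivity

lemma poissonPmf_le_one {l : ℝ} (hl : 0 ≤ l) (y : ℕ) : poissonPmf l y ≤ 1 :=
  calc poissonPmf l y = Real.exp (-l) * (l ^ y / y.factorial) := mul_div_assoc ..
    _ ≤ Real.exp (-l) * Real.exp l := by gcongr; exact Real.pow_div_factorial_le_exp _ hl y
    _ = 1 := by rw [← Real.exp_add, neg_add_cancel, Real.exp_zero]

lemma summable_poissonPmf (l : ℝ) : Summable (poissonPmf l) :=
  ((Real.summable_pow_div_factorial l).mul_left (Real.exp (-l))).congr fun _ ↦
    (mul_div_assoc ..).symm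

lemma summable_poissonPmf_mul_rpow {a b α : ℝ} (ha : 0 ≤ a) (hb : 0 ≤ b) (hα : 0 ≤ α) :
    Summable fun y ↦ poissonPmf a y * poissonPmf b y ^ α :=
  (summable_poissonPmf a).of_nonneg_of_le
    (fun y ↦ mul_nonneg (poissonPmf_nonneg ha y) (Real.rpow_nonneg (poissonPmf_nonneg hb y) α))
    fun y ↦ mul_le_of_le_one_right (poissonPmf_nonneg ha y)
      (Real.rpow_le_one (poissonPmf_nonneg hb y) (poissonPmf_le_one hb y) hα)

lemma summable_poissonPmf_rpow {l α : ℝ} (hl : 0 ≤ l) (hα : 0 ≤ α) :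
    Summable fun y ↦ poissonPmf l y ^ (1 + α) := by
  simpa only [Real.rpow_one_add' (poissonPmf_nonneg hl _) (by linarith : 1 + α ≠ 0)]
    using summable_poissonPmf_mul_rpow hl hl hα

lemma poissonPmf_injective : Function.Injective poissonPmf := fun a b h ↦ by
  simpa [poissonPmf] using congrFun h 0

/-- Fisher consistency of the minimum density power divergence functional for
the Poisson family: for `X ~ Poisson(lam0)`, the expected DPD loss
`E[l_α(λ, X)] = Σ_y p_λ(y)^{1+α} − (1+1/α) Σ_y p_{lam0}(y) p_λ(y)^α`
is uniquely minimized over `λ > 0` at `λ = lam0`. -/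
theorem stmt_11 (α lam0 : ℝ) (hα : 0 < α) (hlam0 : 0 < lam0) :
    ∀ l : ℝ, 0 < l → l ≠ lam0 →
      (∑' y : ℕ, poissonPmf lam0 y ^ (1 + α)) -
          (1 + 1 / α) * ∑' y : ℕ, poissonPmf lam0 y * poissonPmf lam0 y ^ α <
        (∑' y : ℕ, poissonPmf l y ^ (1 + α)) -
          (1 + 1 / α) * ∑' y : ℕ, poissonPmf lam0 y * poissonPmf l y ^ α := by
  intro l hl hne
  exact expectedDPDLoss_lt_of_ne hα (poissonPmf_nonneg hlam0.le) (poissonPmf_nonneg hl.le)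
    (summable_poissonPmf_rpow hlam0.le hα.le) (summable_poissonPmf_rpow hl.le hα.le)
    (summable_poissonPmf_mul_rpow hlam0.le hl.le hα.le) (poissonPmf_injective.ne hne.symm)
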